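/- (Dimension-free direct bound.) Let 𝒯 be a tree satisfying the geometric decay condition |Ω′| ≤ ρ|Ω| for children, with 0 < ρ < 1. Let f : Ω₀ → ℝ^{L−1}, 0 < p < ∞, α > 0, and 1/τ = α + 1/p. Then N_τ(f,𝒯)^τ ≤ C(τ, ρ, α) · |f|^τ_{B̃_τ^{α,1}(𝒯)}, where C does not depend on the ambient dimension n. -/

import Mathlib

open MeasureTheory
open scoped ENNReal

/-- The mean `E⃗_Ω` of `f` over `Ω`. -/
noncomputable def cellMean {n d : ℕ} (f : (Fin n → ℝ) → EuclideanSpace ℝ (Fin d))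
    (Ω : Set (Fin n → ℝ)) : EuclideanSpace ℝ (Fin d) := ⨍ x in Ω, f x

/-- The `τ`-th power of the averaged-modulus Besov semi-norm
`|f|_{B̃_τ^{α,1}(𝒯)} = (Σ_{Ω∈𝒯} (|Ω|^{-α} w₁(f,Ω)_τ)^τ)^{1/τ}`, where
`w₁(f,Ω)_τ^τ = ∫_Ω ‖f - E⃗_Ω‖_{ℓ₂}^τ`; node `(l,j)` is the `j`-th cell at level `l`. -/
noncomputable def besovTildeTau {n d : ℕ} (α τ : ℝ)
    (f : (Fin n → ℝ) → EuclideanSpace ℝ (Fin d))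
    (cells : ℕ → ℕ → Set (Fin n → ℝ)) : ℝ≥0∞ :=
  ∑' (l : ℕ) (j : ℕ), volume (cells l j) ^ (-(α * τ)) *
    ∫⁻ x in cells l j, (‖f x - cellMean f (cells l j)‖₊ : ℝ≥0∞) ^ τ

/-- The `τ`-th power of the tree sparsity `N_τ(f,𝒯) = (Σ_{Ω'≠Ω₀} ‖ψ_{Ω'}‖_p^τ)^{1/τ}`, where
`‖ψ_{Ω'}‖_p^τ = ‖E⃗_{Ω'} - E⃗_Ω‖_{ℓ₂}^τ |Ω'|^{τ/p}` (`Ω` the parent of `Ω'`); the cells at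
level `l+1` with index `j` have parent `(l, j/2)`. -/
noncomputable def sparsityTau {n d : ℕ} (τ p : ℝ)
    (f : (Fin n → ℝ) → EuclideanSpace ℝ (Fin d))
    (cells : ℕ → ℕ → Set (Fin n → ℝ)) : ℝ≥0∞ :=
  ∑' (l : ℕ) (j : ℕ),
    (‖cellMean f (cells (l + 1) j) - cellMean f (cells l (j / 2))‖₊ : ℝ≥0∞) ^ τ *
      volume (cells (l + 1) j) ^ (τ / p)

/-!
Each term of `N_τ^τ` compares the means `E'` of a child `Ω'` and `E` of its parent `Ω`. Since
`‖E' - E‖ ≤ ‖f - E'‖ + ‖f - E‖` pointwise, integrating over `Ω'` bounds `‖E' - E‖^τ |Ω'|` by `2^τ`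
times the two local oscillations. The exponent relation gives `|Ω'|^{τ/p} = |Ω'| |Ω'|^{-ατ}`, and
as the sibling of `Ω'` has measure at most `ρ|Ω|`, `|Ω'| ≥ (1 - ρ)|Ω|`. Every node is the parent
of two children, so summing over the tree gives `C = 2^τ (1 + 2 (1 - ρ)^{-ατ})`, whatever `n`.
-/

section DyadicTree

variable {X : Type*} {cells : ℕ → ℕ → Set X}

theorem exists_sibling
    (hunion : ∀ l j, cells (l + 1) (2 * j) ∪ cells (l + 1) (2 * j + 1) = cells l j) (l j : ℕ) :
    ∃ k, k / 2 = j / 2 ∧ cells (l + 1) j ∪ cells (l + 1) k = cells l (j / 2) := by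
  rcases Nat.even_or_odd' j with ⟨m, rfl | rfl⟩
  · exact ⟨2 * m + 1, by omega, by rw [show 2 * m / 2 = m by omega, hunion]⟩
  · exact ⟨2 * m, by omega, by rw [show (2 * m + 1) / 2 = m by omega, Set.union_comm, hunion]⟩

theorem cells_succ_subset_parent
    (hunion : ∀ l j, cells (l + 1) (2 * j) ∪ cells (l + 1) (2 * j + 1) = cells l j) (l j : ℕ) :
    cells (l + 1) j ⊆ cells l (j / 2) := by
  obtain ⟨k, -, hunion_jk⟩ := exists_sibling hunion l j
  exact hunion_jk ▸ Set.subset_union_left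

theorem cells_subset_root (hempty : ∀ j, j ≠ 0 → cells 0 j = ∅)
    (hunion : ∀ l j, cells (l + 1) (2 * j) ∪ cells (l + 1) (2 * j + 1) = cells l j) :
    ∀ l j, cells l j ⊆ cells 0 0
  | 0, 0 => subset_rfl
  | 0, j + 1 => by simp [hempty (j + 1) j.succ_ne_zero]
  | l + 1, j => (cells_succ_subset_parent hunion l j).trans (cells_subset_root hempty hunion l _)

theorem one_sub_mul_measure_parent_le [MeasurableSpace X] {μ : Measure X} {ρ : ℝ≥0∞}
    (hunion : ∀ l j, cells (l + 1) (2 * j) ∪ cells (l + 1) (2 * j + 1) = cells l j)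
    (hdecay : ∀ l j, μ (cells (l + 1) j) ≤ ρ * μ (cells l (j / 2))) {l j : ℕ}
    (hfin : μ (cells l (j / 2)) ≠ ⊤) :
    (1 - ρ) * μ (cells l (j / 2)) ≤ μ (cells (l + 1) j) := by
  obtain ⟨k, hk, hunion_jk⟩ := exists_sibling hunion l j
  rw [ENNReal.sub_mul fun _ _ ↦ hfin, one_mul, tsub_le_iff_right]
  calc μ (cells l (j / 2)) ≤ μ (cells (l + 1) j) + μ (cells (l + 1) k) :=
        hunion_jk ▸ measure_union_le _ _
    _ ≤ μ (cells (l + 1) j) + ρ * μ (cells l (j / 2)) := by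
        gcongr
        exact hk ▸ hdecay l k

end DyadicTree

section OscillationBound

variable {X E : Type*} [MeasurableSpace X] [NormedAddCommGroup E] {μ : Measure X} {f : X → E}
  {s t : Set X} {τ : ℝ}

theorem nnnorm_sub_rpow_mul_measure_le (hτ : 0 ≤ τ) (hf : AEStronglyMeasurable f (μ.restrict s))
    (u v : E) :
    (‖u - v‖₊ : ℝ≥0∞) ^ τ * μ s ≤ 2 ^ τ *
      ((∫⁻ x in s, (‖f x - u‖₊ : ℝ≥0∞) ^ τ ∂μ) + ∫⁻ x in s, (‖f x - v‖₊ : ℝ≥0∞) ^ τ ∂μ) := by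
  have hpoint : ∀ x, (‖u - v‖₊ : ℝ≥0∞) ^ τ ≤
      2 ^ τ * ((‖f x - u‖₊ : ℝ≥0∞) ^ τ + (‖f x - v‖₊ : ℝ≥0∞) ^ τ) := fun x ↦ by
    refine le_trans ?_ (ENNReal.add_rpow_le_two_rpow_mul_rpow_add_rpow _ _ hτ)
    gcongr
    simpa only [edist_eq_enorm_sub, enorm_eq_nnnorm] using edist_triangle_left u v (f x)
  have hmeas : AEMeasurable (fun x ↦ (‖f x - u‖₊ : ℝ≥0∞) ^ τ) (μ.restrict s) :=
    (hf.sub aestronglyMeasurable_const).enorm.pow_const τ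
  rw [← setLIntegral_const, ← lintegral_add_left' hmeas,
    ← lintegral_const_mul' _ _ (ENNReal.rpow_ne_top_of_nonneg hτ ENNReal.ofNat_ne_top)]
  exact lintegral_mono hpoint

theorem nnnorm_sub_rpow_mul_measure_rpow_le {σ : ℝ} {c : ℝ≥0∞} (hτ : 0 ≤ τ) (hσ : 0 ≤ σ)
    (hst : s ⊆ t) (hc : c ≠ 0) (hct : c * μ t ≤ μ s) (hs0 : μ s ≠ 0) (hs : μ s ≠ ⊤)
    (hf : AEStronglyMeasurable f (μ.restrict s)) (u v : E) :
    (‖u - v‖₊ : ℝ≥0∞) ^ τ * μ s ^ (1 - σ) ≤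
      2 ^ τ * (μ s ^ (-σ) * ∫⁻ x in s, (‖f x - u‖₊ : ℝ≥0∞) ^ τ ∂μ) +
        2 ^ τ * c ^ (-σ) * (μ t ^ (-σ) * ∫⁻ x in t, (‖f x - v‖₊ : ℝ≥0∞) ^ τ ∂μ) := by
  have ht0 : μ t ≠ 0 := fun h ↦ hs0 (measure_mono_null hst h)
  have hscale : μ s ^ (-σ) ≤ c ^ (-σ) * μ t ^ (-σ) := by
    rw [← ENNReal.mul_rpow_of_ne_zero hc ht0, ENNReal.rpow_neg, ENNReal.rpow_neg]
    exact ENNReal.inv_le_inv.mpr (ENNReal.rpow_le_rpow hct hσ)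
  calc (‖u - v‖₊ : ℝ≥0∞) ^ τ * μ s ^ (1 - σ)
      = (‖u - v‖₊ : ℝ≥0∞) ^ τ * μ s * μ s ^ (-σ) := by
        rw [sub_eq_add_neg (1 : ℝ), ENNReal.rpow_add _ _ hs0 hs, ENNReal.rpow_one, mul_assoc]
    _ ≤ 2 ^ τ * ((∫⁻ x in s, (‖f x - u‖₊ : ℝ≥0∞) ^ τ ∂μ) +
          ∫⁻ x in s, (‖f x - v‖₊ : ℝ≥0∞) ^ τ ∂μ) * μ s ^ (-σ) := by
        gcongr ?_ * _
        exact nnnorm_sub_rpow_mul_measure_le hτ hf u v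
    _ = 2 ^ τ * (μ s ^ (-σ) * ∫⁻ x in s, (‖f x - u‖₊ : ℝ≥0∞) ^ τ ∂μ) +
          2 ^ τ * (μ s ^ (-σ) * ∫⁻ x in s, (‖f x - v‖₊ : ℝ≥0∞) ^ τ ∂μ) := by ring
    _ ≤ _ := by
        rw [mul_assoc (2 ^ τ) (c ^ (-σ)), ← mul_assoc (c ^ (-σ))]
        gcongr

end OscillationBound

theorem tsum_comp_div_two (g : ℕ → ℝ≥0∞) : ∑' j, g (j / 2) = 2 * ∑' j, g j := by
  rw [← tsum_even_add_odd ENNReal.summable ENNReal.summable, two_mul]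
  congr 1 <;> exact tsum_congr fun k ↦ by congr 1; omega

theorem tsum_tsum_child_add_parent_le (B : ℕ → ℕ → ℝ≥0∞) (a b : ℝ≥0∞) :
    ∑' (l : ℕ) (j : ℕ), (a * B (l + 1) j + b * B l (j / 2)) ≤
      (a + 2 * b) * ∑' (l : ℕ) (j : ℕ), B l j := by
  simp only [ENNReal.tsum_add, ENNReal.tsum_mul_left, tsum_comp_div_two]
  have hshift : ∑' (l : ℕ) (j : ℕ), B (l + 1) j ≤ ∑' (l : ℕ) (j : ℕ), B l j :=
    (tsum_eq_zero_add' (f := fun l ↦ ∑' j, B l j) ENNReal.summable).symm ▸ le_add_self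
  rw [add_mul, mul_assoc 2, mul_left_comm 2]
  gcongr a * ?_ + _

section Cells

variable {n d : ℕ} {f : (Fin n → ℝ) → EuclideanSpace ℝ (Fin d)}

/-- The summand `(|Ω|^{-α} w₁(f,Ω)_τ)^τ` of `besovTildeTau`. -/
noncomputable def besovSummand (α τ : ℝ) (f : (Fin n → ℝ) → EuclideanSpace ℝ (Fin d))
    (Ω : Set (Fin n → ℝ)) : ℝ≥0∞ :=
  volume Ω ^ (-(α * τ)) * ∫⁻ x in Ω, (‖f x - cellMean f Ω‖₊ : ℝ≥0∞) ^ τ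

theorem cellMean_of_volume_eq_zero {Ω : Set (Fin n → ℝ)} (h : volume Ω = 0) :
    cellMean f Ω = 0 := by
  rw [cellMean, Measure.restrict_eq_zero.mpr h, average_zero_measure]

theorem sparsity_summand_le {cells : ℕ → ℕ → Set (Fin n → ℝ)} {ρ : ℝ≥0∞} {α τ : ℝ}
    (hρ : ρ < 1) (hα : 0 ≤ α) (hτ : 0 < τ) (hempty : ∀ j, j ≠ 0 → cells 0 j = ∅)
    (hunion : ∀ l j, cells (l + 1) (2 * j) ∪ cells (l + 1) (2 * j + 1) = cells l j)
    (hdecay : ∀ l j, volume (cells (l + 1) j) ≤ ρ * volume (cells l (j / 2)))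
    (hfin : volume (cells 0 0) < ⊤) (hint : IntegrableOn f (cells 0 0)) (l j : ℕ) :
    (‖cellMean f (cells (l + 1) j) - cellMean f (cells l (j / 2))‖₊ : ℝ≥0∞) ^ τ *
        volume (cells (l + 1) j) ^ (1 - α * τ) ≤
      2 ^ τ * besovSummand α τ f (cells (l + 1) j) +
        2 ^ τ * (1 - ρ) ^ (-(α * τ)) * besovSummand α τ f (cells l (j / 2)) := by
  have hroot := cells_subset_root hempty hunion
  have hparent_fin : volume (cells l (j / 2)) ≠ ⊤ :=
    ((measure_mono (hroot l _)).trans_lt hfin).ne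
  have hlow := one_sub_mul_measure_parent_le hunion hdecay hparent_fin
  have hc : 1 - ρ ≠ 0 := (tsub_pos_of_lt hρ).ne'
  by_cases hchild : volume (cells (l + 1) j) = 0
  · -- means over null sets take the junk value `0`
    have hparent : volume (cells l (j / 2)) = 0 := by
      simpa [hc] using hlow.trans_eq hchild
    rw [cellMean_of_volume_eq_zero hchild, cellMean_of_volume_eq_zero hparent, sub_self,
      nnnorm_zero, ENNReal.coe_zero, ENNReal.zero_rpow_of_pos hτ, zero_mul]
    exact zero_le
  · exact nnnorm_sub_rpow_mul_measure_rpow_le hτ.le (by positivity)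
      (cells_succ_subset_parent hunion l j) hc hlow hchild
      ((measure_mono (hroot _ _)).trans_lt hfin).ne
      (hint.mono_set (hroot _ _)).aestronglyMeasurable _ _

end Cells

theorem stmt_8 (ρ α p τ : ℝ) (hρ1 : ρ < 1) (hα : 0 < α)
    (hτ0 : 0 < τ) (hτ : 1 / τ = α + 1 / p) :
    ∃ C : ℝ, 0 < C ∧
      ∀ (n d : ℕ) (cells : ℕ → ℕ → Set (Fin n → ℝ))
        (f : (Fin n → ℝ) → EuclideanSpace ℝ (Fin d)),
        (∀ l j, MeasurableSet (cells l j)) →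
        (∀ j, j ≠ 0 → cells 0 j = ∅) →
        (∀ l j, cells (l + 1) (2 * j) ∪ cells (l + 1) (2 * j + 1) = cells l j) →
        (∀ l j, Disjoint (cells (l + 1) (2 * j)) (cells (l + 1) (2 * j + 1))) →
        (∀ l j, volume (cells (l + 1) j) ≤ ENNReal.ofReal ρ * volume (cells l (j / 2))) →
        volume (cells 0 0) < ⊤ →
        IntegrableOn f (cells 0 0) →
        sparsityTau τ p f cells ≤ ENNReal.ofReal C * besovTildeTau α τ f cells := by
  have hρ : ENNReal.ofReal ρ < 1 := ENNReal.ofReal_lt_one.mpr hρ1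
  have hτp : τ / p = 1 - α * τ := by
    rw [div_eq_mul_one_div, show 1 / p = 1 / τ - α by linarith, mul_sub,
      mul_one_div_cancel hτ0.ne']
    ring
  set K : ℝ≥0∞ := 2 ^ τ + 2 * (2 ^ τ * (1 - ENNReal.ofReal ρ) ^ (-(α * τ)))
  have hK : K ≠ ⊤ := by
    have hdecay_pow := ENNReal.rpow_ne_top_of_ne_zero (tsub_pos_of_lt hρ).ne' (by simp)
      (y := -(α * τ))
    have htwo_pow := ENNReal.rpow_ne_top_of_nonneg hτ0.le ENNReal.ofNat_ne_top (x := 2)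
    finiteness
  refine ⟨K.toReal, ENNReal.toReal_pos (by positivity) hK, ?_⟩
  intro n d cells f _ hempty hunion _ hdecay hfin hint
  rw [ENNReal.ofReal_toReal hK]
  calc sparsityTau τ p f cells
      ≤ ∑' (l : ℕ) (j : ℕ), (2 ^ τ * besovSummand α τ f (cells (l + 1) j) +
          2 ^ τ * (1 - ENNReal.ofReal ρ) ^ (-(α * τ)) * besovSummand α τ f (cells l (j / 2))) :=
        ENNReal.tsum_le_tsum fun l ↦ ENNReal.tsum_le_tsum fun j ↦ by
          rw [hτp]
          exact sparsity_summand_le hρ hα.le hτ0 hempty hunion hdecay hfin hint l j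
    _ ≤ K * besovTildeTau α τ f cells := tsum_tsum_child_add_parent_le _ _ _
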